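/- Let u : ℝ^{1+n} → ℂ be smooth and satisfy □₂(u^k) = 0 for k = 1, 2 (i.e., the CP¹-submodel). Then for any C² function f(u,ū), the current V_{2,μ}(f) = (∂f/∂u)∂_μu − (∂f/∂ū)∂_μū is conserved: ∂^μ V_{2,μ}(f) = 0. -/

import Mathlib

/-- Partial derivative in the μ-th coordinate direction. -/
noncomputable def pd {n : ℕ} (μ : Fin (n+1)) (u : (Fin (n+1) → ℝ) → ℂ) :
    (Fin (n+1) → ℝ) → ℂ :=
  fun x => fderiv ℝ u x (Pi.single μ 1)

/-- The d'Alembertian □₂ = ∂₀² − Σⱼ ∂ⱼ² on ℝ^{1+n}. -/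
noncomputable def box2 {n : ℕ} (u : (Fin (n+1) → ℝ) → ℂ) :
    (Fin (n+1) → ℝ) → ℂ :=
  fun x => pd 0 (pd 0 u) x - ∑ j : Fin n, pd j.succ (pd j.succ u) x

/-- Wirtinger derivative ∂F/∂z of F : ℂ → ℂ viewed as a real-differentiable map. -/
noncomputable def w1 (F : ℂ → ℂ) : ℂ → ℂ :=
  fun z => (fderiv ℝ F z 1 - Complex.I * fderiv ℝ F z Complex.I) / 2

/-- Wirtinger derivative ∂F/∂z̄ of F : ℂ → ℂ. -/
noncomputable def w1bar (F : ℂ → ℂ) : ℂ → ℂ :=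
  fun z => (fderiv ℝ F z 1 + Complex.I * fderiv ℝ F z Complex.I) / 2

/- ### Auxiliary lemmas -/

lemma pd_contDiff {n : ℕ} {u : (Fin (n+1) → ℝ) → ℂ} (hu : ContDiff ℝ (⊤ : ℕ∞) u) (μ : Fin (n+1)) :
    ContDiff ℝ (⊤ : ℕ∞) (pd μ u) :=
  (hu.fderiv_right (by simp)).clm_apply contDiff_const

lemma wirt (F : ℂ → ℂ) (z : ℂ) (v : ℂ) :
    fderiv ℝ F z v = w1 F z * v + w1bar F z * (starRingEnd ℂ) v := by
  have e1 : fderiv ℝ F z ((v.re:ℂ) + (v.im:ℂ)*Complex.I)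
      = v.re • fderiv ℝ F z 1 + v.im • fderiv ℝ F z Complex.I := by
    rw [show ((v.re:ℂ) + (v.im:ℂ)*Complex.I) = v.re • (1:ℂ) + v.im • Complex.I by
      simp [Complex.real_smul], map_add, map_smul, map_smul]
  have e2 : (starRingEnd ℂ) ((v.re:ℂ) + (v.im:ℂ)*Complex.I)
      = (v.re:ℂ) - (v.im:ℂ)*Complex.I := by
    rw [map_add, map_mul, Complex.conj_I, Complex.conj_ofReal, Complex.conj_ofReal]; ring
  rw [← Complex.re_add_im v, e1, e2]
  simp only [w1, w1bar, Complex.real_smul]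
  linear_combination ((v.im:ℂ) * fderiv ℝ F z Complex.I) * Complex.I_sq

section helpers
variable {n : ℕ} {μ : Fin (n+1)} {x : Fin (n+1) → ℝ}

lemma pd_comp {u : (Fin (n+1) → ℝ) → ℂ} {F : ℂ → ℂ}
    (hu : DifferentiableAt ℝ u x) (hF : DifferentiableAt ℝ F (u x)) :
    pd μ (fun y => F (u y)) x = fderiv ℝ F (u x) (pd μ u x) := by
  simp only [pd]
  rw [show (fun y => F (u y)) = F ∘ u from rfl, fderiv_comp x hF hu]
  rfl

lemma pd_comp_w {u : (Fin (n+1) → ℝ) → ℂ} {F : ℂ → ℂ}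
    (hu : DifferentiableAt ℝ u x) (hF : DifferentiableAt ℝ F (u x)) :
    pd μ (fun y => F (u y)) x
      = w1 F (u x) * pd μ u x + w1bar F (u x) * (starRingEnd ℂ) (pd μ u x) := by
  rw [pd_comp hu hF, wirt]

lemma pd_conj {u : (Fin (n+1) → ℝ) → ℂ} (hu : DifferentiableAt ℝ u x) :
    pd μ (fun y => (starRingEnd ℂ) (u y)) x = (starRingEnd ℂ) (pd μ u x) := by
  simp only [pd]
  have : fderiv ℝ (fun y => (starRingEnd ℂ) (u y)) x
      = (Complex.conjCLE.toContinuousLinearMap).comp (fderiv ℝ u x) :=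
    (Complex.conjCLE.toContinuousLinearMap.hasFDerivAt.comp x hu.hasFDerivAt).fderiv
  rw [this]; rfl

lemma pd_mul {g h : (Fin (n+1) → ℝ) → ℂ}
    (hg : DifferentiableAt ℝ g x) (hh : DifferentiableAt ℝ h x) :
    pd μ (fun y => g y * h y) x = pd μ g x * h x + g x * pd μ h x := by
  simp only [pd]
  rw [fderiv_fun_mul hg hh]
  simp only [ContinuousLinearMap.add_apply, ContinuousLinearMap.smul_apply, smul_eq_mul]
  ring

lemma pd_sub {g h : (Fin (n+1) → ℝ) → ℂ}
    (hg : DifferentiableAt ℝ g x) (hh : DifferentiableAt ℝ h x) :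
    pd μ (fun y => g y - h y) x = pd μ g x - pd μ h x := by
  simp only [pd]
  rw [fderiv_fun_sub hg hh]; rfl

lemma pd_add {g h : (Fin (n+1) → ℝ) → ℂ}
    (hg : DifferentiableAt ℝ g x) (hh : DifferentiableAt ℝ h x) :
    pd μ (fun y => g y + h y) x = pd μ g x + pd μ h x := by
  simp only [pd]
  rw [fderiv_fun_add hg hh]; rfl

end helpers

section second
variable {f : ℂ → ℂ} (hf : ContDiff ℝ 2 f)
include hf

lemma fderiv_snd_diff : Differentiable ℝ (fderiv ℝ f) :=
  (hf.fderiv_right (m := 1) (by norm_num)).differentiable one_ne_zero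

lemma fderiv_eval (z : ℂ) (w : ℂ) :
    fderiv ℝ (fun y => fderiv ℝ f y w) z = (fderiv ℝ (fderiv ℝ f) z).flip w := by
  rw [fderiv_clm_apply (fderiv_snd_diff hf z) (differentiableAt_const w)]
  ext v
  simp

lemma diff_eval (z : ℂ) (w : ℂ) :
    DifferentiableAt ℝ (fun y => fderiv ℝ f y w) z :=
  (fderiv_snd_diff hf z).clm_apply (differentiableAt_const w)

lemma contDiff_w1 : ContDiff ℝ 1 (w1 f) := by
  have h : ∀ w : ℂ, ContDiff ℝ 1 (fun y => fderiv ℝ f y w) := fun w =>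
    (hf.fderiv_right (by norm_num)).clm_apply contDiff_const
  exact ((h 1).sub (contDiff_const.mul (h Complex.I))).div_const 2

lemma contDiff_w1bar : ContDiff ℝ 1 (w1bar f) := by
  have h : ∀ w : ℂ, ContDiff ℝ 1 (fun y => fderiv ℝ f y w) := fun w =>
    (hf.fderiv_right (by norm_num)).clm_apply contDiff_const
  exact ((h 1).add (contDiff_const.mul (h Complex.I))).div_const 2

lemma fderiv_w1_apply (z v : ℂ) :
    fderiv ℝ (w1 f) z v
      = (fderiv ℝ (fderiv ℝ f) z v 1 - Complex.I * fderiv ℝ (fderiv ℝ f) z v Complex.I) / 2 := by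
  have h1 := diff_eval hf z (1:ℂ)
  have hI := diff_eval hf z Complex.I
  have : w1 f = fun y =>
      (fderiv ℝ f y 1 - Complex.I * fderiv ℝ f y Complex.I) * (2:ℂ)⁻¹ := by
    funext y; rw [w1, div_eq_mul_inv]
  rw [this, fderiv_mul_const (c := fun y => fderiv ℝ f y 1 - Complex.I * fderiv ℝ f y Complex.I) ((h1.sub (hI.const_mul Complex.I))) ((2:ℂ)⁻¹)]
  rw [fderiv_fun_sub h1 (hI.const_mul Complex.I), fderiv_const_mul hI Complex.I]
  simp only [ContinuousLinearMap.smul_apply, ContinuousLinearMap.sub_apply, smul_eq_mul,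
    fderiv_eval hf, ContinuousLinearMap.flip_apply]
  ring

lemma fderiv_w1bar_apply (z v : ℂ) :
    fderiv ℝ (w1bar f) z v
      = (fderiv ℝ (fderiv ℝ f) z v 1 + Complex.I * fderiv ℝ (fderiv ℝ f) z v Complex.I) / 2 := by
  have h1 := diff_eval hf z (1:ℂ)
  have hI := diff_eval hf z Complex.I
  have : w1bar f = fun y =>
      (fderiv ℝ f y 1 + Complex.I * fderiv ℝ f y Complex.I) * (2:ℂ)⁻¹ := by
    funext y; rw [w1bar, div_eq_mul_inv]
  rw [this, fderiv_mul_const (c := fun y => fderiv ℝ f y 1 + Complex.I * fderiv ℝ f y Complex.I) ((h1.add (hI.const_mul Complex.I))) ((2:ℂ)⁻¹)]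
  rw [fderiv_fun_add h1 (hI.const_mul Complex.I), fderiv_const_mul hI Complex.I]
  simp only [ContinuousLinearMap.smul_apply, ContinuousLinearMap.add_apply, smul_eq_mul,
    fderiv_eval hf, ContinuousLinearMap.flip_apply]
  ring

lemma mixed_symm (z : ℂ) : w1bar (w1 f) z = w1 (w1bar f) z := by
  have hsym : fderiv ℝ (fderiv ℝ f) z 1 Complex.I = fderiv ℝ (fderiv ℝ f) z Complex.I 1 :=
    (hf.contDiffAt.isSymmSndFDerivAt (by simp)) 1 Complex.I
  rw [w1bar, w1, fderiv_w1_apply hf, fderiv_w1_apply hf,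
    fderiv_w1bar_apply hf, fderiv_w1bar_apply hf]
  rw [hsym]; ring

end second

theorem stmt15 {n : ℕ} (u : (Fin (n+1) → ℝ) → ℂ)
    (hu : ContDiff ℝ (⊤ : ℕ∞) u)
    (heqs : ∀ k : ℕ, 1 ≤ k → k ≤ 2 → ∀ x, box2 (fun y => (u y)^k) x = 0)
    (f : ℂ → ℂ) (hf : ContDiff ℝ 2 f)
    (V : Fin (n+1) → (Fin (n+1) → ℝ) → ℂ)
    (hV : V = fun μ x =>
      w1 f (u x) * pd μ u x - w1bar f (u x) * pd μ (fun y => starRingEnd ℂ (u y)) x) :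
    ∀ x, pd 0 (V 0) x - ∑ l : Fin n, pd l.succ (V l.succ) x = 0 := by
  intro x
  have hud : Differentiable ℝ u := hu.differentiable (by simp)
  have hpdu : ∀ μ, Differentiable ℝ (pd μ u) := fun μ => (pd_contDiff hu μ).differentiable (by simp)
  have hgd : Differentiable ℝ (w1 f) := (contDiff_w1 hf).differentiable one_ne_zero
  have hhd : Differentiable ℝ (w1bar f) := (contDiff_w1bar hf).differentiable one_ne_zero
  have hconjpd : ∀ μ, Differentiable ℝ (fun y => (starRingEnd ℂ) (pd μ u y)) := fun μ =>
    Complex.conjCLE.differentiable.comp (hpdu μ)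
  have hgu : ∀ y, DifferentiableAt ℝ (fun y' => w1 f (u y')) y := fun y =>
    (hgd (u y)).comp y (hud y)
  have hhu : ∀ y, DifferentiableAt ℝ (fun y' => w1bar f (u y')) y := fun y =>
    (hhd (u y)).comp y (hud y)
  -- box u = 0
  have hbox : ∀ y, pd 0 (pd 0 u) y - ∑ j : Fin n, pd j.succ (pd j.succ u) y = 0 := by
    intro y
    have h := heqs 1 le_rfl one_le_two y
    simpa [box2, pow_one] using h
  -- the wave equation for u^2 yields the null condition
  have hsq : ∀ (ρ : Fin (n+1)), pd ρ (pd ρ (fun y => u y * u y)) x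
      = 2 * (pd ρ u x)^2 + 2 * (u x * pd ρ (pd ρ u) x) := by
    intro ρ
    have e1 : pd ρ (fun y => u y * u y) = fun y => pd ρ u y * u y + u y * pd ρ u y := by
      funext y; exact pd_mul (hud y) (hud y)
    rw [e1, pd_add ((hpdu ρ x).fun_mul (hud x)) ((hud x).fun_mul (hpdu ρ x)),
      pd_mul (hpdu ρ x) (hud x), pd_mul (hud x) (hpdu ρ x)]
    ring
  have hS1 : (pd 0 u x)^2 - ∑ j : Fin n, (pd j.succ u x)^2 = 0 := by
    have h2 := heqs 2 one_le_two le_rfl x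
    have e : (fun y => (u y)^2) = fun y => u y * u y := by
      funext y; rw [sq]
    rw [e] at h2
    simp only [box2, hsq] at h2
    rw [Finset.sum_add_distrib, ← Finset.mul_sum, ← Finset.mul_sum,
      ← Finset.mul_sum] at h2
    have hb := hbox x
    linear_combination h2 / 2 - (u x) * hb
  have hS1c : ((starRingEnd ℂ) (pd 0 u x))^2
      - ∑ j : Fin n, ((starRingEnd ℂ) (pd j.succ u x))^2 = 0 := by
    have := congrArg (starRingEnd ℂ) hS1
    simpa [map_sub, map_sum, map_pow] using this
  have hboxc : (starRingEnd ℂ) (pd 0 (pd 0 u) x)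
      - ∑ j : Fin n, (starRingEnd ℂ) (pd j.succ (pd j.succ u) x) = 0 := by
    have := congrArg (starRingEnd ℂ) (hbox x)
    simpa [map_sub, map_sum] using this
  -- the key pointwise identity for the divergence summands
  have hVeq : ∀ μ, V μ = fun y =>
      w1 f (u y) * pd μ u y - w1bar f (u y) * (starRingEnd ℂ) (pd μ u y) := by
    intro μ; funext y
    rw [hV]
    simp only
    rw [pd_conj (hud y)]
  have key : ∀ ρ : Fin (n+1), pd ρ (V ρ) x
      = w1 (w1 f) (u x) * (pd ρ u x)^2 + w1 f (u x) * pd ρ (pd ρ u) x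
        - w1bar (w1bar f) (u x) * ((starRingEnd ℂ) (pd ρ u x))^2
        - w1bar f (u x) * (starRingEnd ℂ) (pd ρ (pd ρ u) x) := by
    intro ρ
    rw [hVeq ρ]
    rw [pd_sub ((hgu x).fun_mul (hpdu ρ x)) ((hhu x).fun_mul (hconjpd ρ x)),
      pd_mul (hgu x) (hpdu ρ x), pd_mul (hhu x) (hconjpd ρ x),
      pd_comp_w (hud x) (hgd (u x)), pd_comp_w (hud x) (hhd (u x)),
      pd_conj (hpdu ρ x)]
    have hc : w1bar (w1 f) (u x) = w1 (w1bar f) (u x) := mixed_symm hf (u x)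
    linear_combination ((starRingEnd ℂ) (pd ρ u x) * pd ρ u x) * hc
  simp only [key]
  rw [Finset.sum_sub_distrib, Finset.sum_sub_distrib, Finset.sum_add_distrib,
    ← Finset.mul_sum, ← Finset.mul_sum, ← Finset.mul_sum, ← Finset.mul_sum]
  linear_combination w1 (w1 f) (u x) * hS1 + w1 f (u x) * hbox x
    - w1bar (w1bar f) (u x) * hS1c - w1bar f (u x) * hboxc
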